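/- arXiv:math/0610218 — 4 statements merged into one kernel-verified Lean document; each statement's English description precedes it below -/
import Mathlib

section
/- For 0 < α < 1, the function ρ_α(y) = (sin(πα)/π) · y^{α-1} / (y^{2α} + 2y^α cos(πα) + 1) on (0,∞) is a probability density, i.e., ∫₀^∞ ρ_α(y) dy = 1. -/
/-!
Substituting `t = y ^ α` turns the integral into
`(sin (π α) / (π α)) ∫₀^∞ dt / (t² + 2 t cos (π α) + 1)`. Completing the square,
`t² + 2 t cos θ + 1 = (t + cos θ)² + sin² θ`, so the last integral is
`(π/2 - arctan (cot θ)) / sin θ = θ / sin θ` for `0 < θ < π`.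
-/

open Real MeasureTheory Set Filter

lemma sq_add_two_mul_cos_add_one (t θ : ℝ) :
    t ^ 2 + 2 * t * cos θ + 1 = (t + cos θ) ^ 2 + sin θ ^ 2 := by
  nlinarith [cos_sq_add_sin_sq θ]

lemma hasDerivAt_arctan_add_cos_div_sin {θ : ℝ} (hθ : sin θ ≠ 0) (x : ℝ) :
    HasDerivAt (fun t => arctan ((t + cos θ) / sin θ) / sin θ)
      (1 / (x ^ 2 + 2 * x * cos θ + 1)) x := by
  have hlin : HasDerivAt (fun t : ℝ => (t + cos θ) / sin θ) (1 / sin θ) x := by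
    simpa using ((hasDerivAt_id x).add_const (cos θ)).div_const (sin θ)
  refine (((hasDerivAt_arctan _).comp x hlin).div_const (sin θ)).congr_deriv ?_
  rw [sq_add_two_mul_cos_add_one]
  field_simp
  ring

lemma arctan_cos_div_sin {θ : ℝ} (h0 : 0 < θ) (hπ : θ < π) :
    arctan (cos θ / sin θ) = π / 2 - θ := by
  rw [← inv_div, ← tan_eq_sin_div_cos, ← tan_pi_div_two_sub,
    arctan_tan (by linarith) (by linarith)]

lemma integral_Ioi_one_div_sq_add_two_mul_cos_add_one {θ : ℝ} (h0 : 0 < θ) (hπ : θ < π) :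
    ∫ t in Ioi (0 : ℝ), 1 / (t ^ 2 + 2 * t * cos θ + 1) = θ / sin θ := by
  have hs : 0 < sin θ := sin_pos_of_pos_of_lt_pi h0 hπ
  have hnonneg : ∀ t ∈ Ioi (0 : ℝ), 0 ≤ 1 / (t ^ 2 + 2 * t * cos θ + 1) := fun t _ => by
    rw [sq_add_two_mul_cos_add_one]
    positivity
  have hcont : Continuous fun t => arctan ((t + cos θ) / sin θ) / sin θ := by fun_prop
  have hlim : Tendsto (fun t => arctan ((t + cos θ) / sin θ) / sin θ) atTop
      (nhds (π / 2 / sin θ)) :=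
    ((tendsto_nhds_of_tendsto_nhdsWithin tendsto_arctan_atTop).comp
      ((tendsto_atTop_add_const_right _ _ tendsto_id).atTop_div_const hs)).div_const _
  rw [integral_Ioi_of_hasDerivAt_of_nonneg hcont.continuousWithinAt
    (fun x _ => hasDerivAt_arctan_add_cos_div_sin hs.ne' x) hnonneg hlim,
    zero_add, arctan_cos_div_sin h0 hπ]
  ring

theorem stmt_0 (α : ℝ) (hα0 : 0 < α) (hα1 : α < 1) :
    ∫ y in Ioi (0:ℝ),
      (Real.sin (π * α) / π) * y ^ (α - 1) /
        (y ^ (2 * α) + 2 * y ^ α * Real.cos (π * α) + 1) = 1 := by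
  set θ := π * α
  have hθ0 : 0 < θ := by positivity
  have hθπ : θ < π := mul_lt_of_lt_one_right pi_pos hα1
  have hs : 0 < sin θ := sin_pos_of_pos_of_lt_pi hθ0 hθπ
  set g : ℝ → ℝ := fun t => 1 / (t ^ 2 + 2 * t * cos θ + 1)
  have hintegrand : ∀ y ∈ Ioi (0 : ℝ),
      sin θ / π * y ^ (α - 1) / (y ^ (2 * α) + 2 * y ^ α * cos θ + 1)
        = sin θ / θ * ((|α| * y ^ (α - 1)) • g (y ^ α)) := fun y (hy : 0 < y) => by
    have hsq : y ^ (2 * α) = (y ^ α) ^ 2 := by rw [mul_comm, rpow_mul hy.le, rpow_two]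
    have hden : 0 < (y ^ α) ^ 2 + 2 * y ^ α * cos θ + 1 := by
      rw [sq_add_two_mul_cos_add_one]
      positivity
    simp only [smul_eq_mul, g, abs_of_pos hα0, hsq, θ]
    field_simp
  rw [setIntegral_congr_fun measurableSet_Ioi hintegrand, integral_const_mul,
    integral_comp_rpow_Ioi g hα0.ne', integral_Ioi_one_div_sq_add_two_mul_cos_add_one hθ0 hθπ]
  field_simp
end

section
/- For 0 < α < 1, the function F(x) = 1 − (1/(πα)) · arccot( cot(πα) + x^α / sin(πα) ) defined on (0,∞) satisfies F'(x) = (sin(πα)/π) · x^{α-1} / (x^{2α} + 2x^α cos(πα) + 1) for all x > 0, and F(x) → 0 as x → 0⁺ and F(x) → 1 as x → ∞. Hence F is the cdf associated to the density ρ_α. -/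
/-!
Substituting `y = x ^ α` and `θ = π α`, the claim is about
`G y = arccot (cot θ + y / sin θ)`. Since `arccot' u = -1 / (1 + u ^ 2)` and
`1 + (cot θ + y / sin θ) ^ 2 = (y ^ 2 + 2 y cos θ + 1) / sin² θ`, the chain rule gives
`G' y = -sin θ / (y ^ 2 + 2 y cos θ + 1)`, and one more chain rule through `x ^ α` yields `ρ_α`.
At `x = 0` the argument is `cot θ`, whose `arccot` is `θ` because `θ ∈ (0, π)`; as `x → ∞`
the argument tends to `+∞`, where `arccot` vanishes.
-/

open Real MeasureTheory Set Filter Topology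

/-- Inverse cotangent with values in `(0, π)`. -/
noncomputable def arccot (x : ℝ) : ℝ := π / 2 - Real.arctan x

lemma continuous_arccot : Continuous arccot :=
  continuous_const.sub continuous_arctan

lemma hasDerivAt_arccot (x : ℝ) : HasDerivAt arccot (-(1 / (1 + x ^ 2))) x :=
  (hasDerivAt_arctan x).const_sub (π / 2)

lemma tendsto_arccot_atTop : Tendsto arccot atTop (𝓝 0) :=
  sub_self (π / 2) ▸ (tendsto_arctan_atTop.mono_right nhdsWithin_le_nhds).const_sub (π / 2)

lemma arccot_cot {θ : ℝ} (h0 : 0 < θ) (hπ : θ < π) : arccot (cot θ) = θ := by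
  have hcot : cot θ = tan (π / 2 - θ) := by
    rw [tan_pi_div_two_sub, cot_eq_cos_div_sin, tan_eq_sin_div_cos, inv_div]
  rw [arccot, hcot, arctan_tan (by linarith) (by linarith)]
  ring

lemma one_add_sq_cot_add_div_sin {θ : ℝ} (hs : sin θ ≠ 0) (y : ℝ) :
    1 + (cot θ + y / sin θ) ^ 2 = (y ^ 2 + 2 * y * cos θ + 1) / sin θ ^ 2 := by
  rw [cot_eq_cos_div_sin]
  field_simp
  linear_combination sin_sq_add_cos_sq θ

lemma hasDerivAt_arccot_cot_add_div_sin {θ : ℝ} (hs : sin θ ≠ 0) (y : ℝ) :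
    HasDerivAt (fun y => arccot (cot θ + y / sin θ))
      (-(sin θ / (y ^ 2 + 2 * y * cos θ + 1))) y := by
  have hinner : HasDerivAt (fun y => cot θ + y / sin θ) (1 / sin θ) y :=
    ((hasDerivAt_id y).div_const _).const_add _
  refine ((hasDerivAt_arccot _).comp y hinner).congr_deriv ?_
  have hD : y ^ 2 + 2 * y * cos θ + 1 ≠ 0 := by
    intro hD
    have h := one_add_sq_cot_add_div_sin hs y
    rw [hD, zero_div] at h
    nlinarith [sq_nonneg (cot θ + y / sin θ)]
  rw [one_add_sq_cot_add_div_sin hs]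
  field_simp

theorem stmt_1 (α : ℝ) (hα0 : 0 < α) (hα1 : α < 1)
    (F : ℝ → ℝ)
    (hF : ∀ x, F x = 1 - (1 / (π * α)) *
        arccot (Real.cot (π * α) + x ^ α / Real.sin (π * α))) :
    (∀ x > (0:ℝ), HasDerivAt F
        ((Real.sin (π * α) / π) * x ^ (α - 1) /
          (x ^ (2 * α) + 2 * x ^ α * Real.cos (π * α) + 1)) x)
    ∧ Tendsto F (𝓝[>] (0:ℝ)) (𝓝 0)
    ∧ Tendsto F atTop (𝓝 1) := by
  have hθ0 : 0 < π * α := by positivity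
  have hθπ : π * α < π := by nlinarith [pi_pos]
  have hsin : 0 < sin (π * α) := sin_pos_of_pos_of_lt_pi hθ0 hθπ
  have hs : sin (π * α) ≠ 0 := hsin.ne'
  set G := fun y => arccot (cot (π * α) + y / sin (π * α))
  have hFG : F = fun x => 1 - 1 / (π * α) * G (x ^ α) := funext hF
  subst hFG
  refine ⟨fun x hx => ?_, ?_, ?_⟩
  · have hG := (hasDerivAt_arccot_cot_add_div_sin hs (x ^ α)).comp x
      (hasDerivAt_rpow_const (p := α) (Or.inl hx.ne'))
    refine ((hG.const_mul (1 / (π * α))).const_sub 1).congr_deriv ?_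
    rw [mul_comm 2 α, rpow_mul hx.le, rpow_two]
    field_simp
  · have hGc : Continuous G :=
      continuous_arccot.comp (continuous_const.add (continuous_id.div_const _))
    have hG : Tendsto (fun x : ℝ => G (x ^ α)) (𝓝[>] 0) (𝓝 (G 0)) := by
      refine (hGc.tendsto 0).comp ?_
      simpa [zero_rpow hα0.ne'] using
        (continuousAt_rpow_const 0 α (Or.inr hα0.le)).tendsto.mono_left nhdsWithin_le_nhds
    convert (hG.const_mul (1 / (π * α))).const_sub 1 using 2
    simp only [G, zero_div, add_zero, arccot_cot hθ0 hθπ]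
    field_simp
    ring
  · have hG : Tendsto (fun x : ℝ => G (x ^ α)) atTop (𝓝 0) :=
      tendsto_arccot_atTop.comp <| tendsto_atTop_add_const_left _ _ <|
        (tendsto_rpow_atTop hα0).atTop_div_const hsin
    simpa using (hG.const_mul (1 / (π * α))).const_sub 1
end

section
/- For x > 0: ∫₀^∞ log|x − y| / (1+y)² dy = (x/(1+x)) · log(x). -/
/-!
The function `F(y) = ((y - x) log |y - x| - (1 + y) log (1 + y)) / ((1 + x) (1 + y))` is an
antiderivative of `log |x - y| / (1 + y)²` away from `y = x`, is continuous across `y = x`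
(because `t log t → 0`), tends to `0` at infinity and has `F(0) = -x log x / (1 + x)`.
On `(0, x + 1]` the fundamental theorem of calculus applies off the single point `x`; beyond
`x + 1` the integrand is nonnegative, which makes it integrable for free.
-/

open Real MeasureTheory Set Filter Topology

noncomputable def logKernelPrimitive (x y : ℝ) : ℝ :=
  ((y - x) * log (y - x) - (1 + y) * log (1 + y)) / ((1 + x) * (1 + y))

section LogKernelPrimitive

variable {x y : ℝ}

theorem hasDerivAt_logKernelPrimitive (hx : 1 + x ≠ 0) (hy : 1 + y ≠ 0) (hyx : y ≠ x) :
    HasDerivAt (logKernelPrimitive x) (log (y - x) / (1 + y) ^ 2) y := by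
  have hsub : HasDerivAt (fun t => t - x) 1 y := (hasDerivAt_id y).sub_const x
  have hadd : HasDerivAt (fun t => 1 + t) 1 y := (hasDerivAt_id y).const_add 1
  have hyx' : y - x ≠ 0 := sub_ne_zero.2 hyx
  have hnum : HasDerivAt (fun t => (t - x) * log (t - x) - (1 + t) * log (1 + t))
      (log (y - x) - log (1 + y)) y :=
    ((hsub.mul (hsub.log hyx')).sub (hadd.mul (hadd.log hy))).congr_deriv (by field_simp; ring)
  exact (hnum.div (hadd.const_mul (1 + x)) (mul_ne_zero hx hy)).congr_deriv (by field_simp; ring)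

theorem continuousAt_logKernelPrimitive (hx : 1 + x ≠ 0) (hy : 1 + y ≠ 0) :
    ContinuousAt (logKernelPrimitive x) y := by
  have hsub : Continuous fun t : ℝ => (t - x) * log (t - x) :=
    continuous_mul_log.comp (continuous_id.sub continuous_const)
  have hadd : Continuous fun t : ℝ => (1 + t) * log (1 + t) :=
    continuous_mul_log.comp (continuous_const.add continuous_id)
  exact ((hsub.sub hadd).continuousAt).div (by fun_prop) (mul_ne_zero hx hy)

theorem logKernelPrimitive_zero (x : ℝ) : logKernelPrimitive x 0 = -(x / (1 + x) * log x) := by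
  simp only [logKernelPrimitive, zero_sub, log_neg_eq_log, add_zero, log_one, mul_zero, mul_one]
  ring

/-- With `t = (y - x) / (1 + y) → 1`,
`(1 + x) F(y) = t log t - (1 + x) log (1 + y) / (1 + y)`. -/
theorem tendsto_logKernelPrimitive_atTop (hx : 1 + x ≠ 0) :
    Tendsto (logKernelPrimitive x) atTop (𝓝 0) := by
  have h1y : Tendsto (fun y : ℝ => 1 + y) atTop atTop :=
    tendsto_atTop_add_const_left _ 1 tendsto_id
  have hratio : Tendsto (fun y : ℝ => (y - x) / (1 + y)) atTop (𝓝 1) := by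
    have := ((tendsto_inv_atTop_zero.comp h1y).const_mul (1 + x)).const_sub 1
    rw [mul_zero, sub_zero] at this
    refine this.congr' ?_
    filter_upwards [eventually_gt_atTop (-1)] with y hy
    have hy : 1 + y ≠ 0 := by linarith
    simp only [Function.comp_apply]
    field_simp
    ring
  have hmulLog :
      Tendsto (fun y : ℝ => (y - x) / (1 + y) * log ((y - x) / (1 + y))) atTop (𝓝 0) := by
    simpa [Function.comp_def] using (continuous_mul_log.tendsto 1).comp hratio
  have hlogDiv : Tendsto (fun y : ℝ => log (1 + y) / (1 + y)) atTop (𝓝 0) := by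
    simpa [Function.comp_def] using (tendsto_pow_log_div_mul_add_atTop 1 0 1 one_ne_zero).comp h1y
  have := (hmulLog.sub (hlogDiv.const_mul (1 + x))).div_const (1 + x)
  simp only [mul_zero, sub_zero, zero_div] at this
  refine this.congr' ?_
  filter_upwards [eventually_gt_atTop x, eventually_gt_atTop (-1)] with y hyx hy
  have hyx : 0 < y - x := sub_pos.2 hyx
  have hy : 0 < 1 + y := by linarith
  rw [logKernelPrimitive, log_div hyx.ne' hy.ne']
  field_simp
  ring

end LogKernelPrimitive

theorem intervalIntegrable_log_sub_div_sq {x a b : ℝ} (ha : -1 < a) (hb : -1 < b) :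
    IntervalIntegrable (fun y => log (y - x) / (1 + y) ^ 2) volume a b := by
  have hlog : IntervalIntegrable (fun y => log (y - x)) volume a b := by
    simpa using
      intervalIntegral.intervalIntegrable_log'.comp_sub_right (a := a - x) (b := b - x) x
  refine hlog.mul_continuousOn (g := fun y => ((1 + y) ^ 2)⁻¹) ?_
  refine ContinuousOn.inv₀ (by fun_prop) fun y hy => ?_
  have : 0 < 1 + y := by linarith [lt_of_lt_of_le (lt_min ha hb) hy.1]
  positivity

theorem integral_Ioi_log_sub_div_sq {x : ℝ} (hx : 0 < x) :
    ∫ y in Ioi (0 : ℝ), log (y - x) / (1 + y) ^ 2 = -logKernelPrimitive x 0 := by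
  set f := fun y : ℝ => log (y - x) / (1 + y) ^ 2
  set F := logKernelPrimitive x
  have hx1 : 1 + x ≠ 0 := by positivity
  have hb : 0 ≤ x + 1 := by positivity
  have hnear : ∫ y in (0)..(x + 1), f y = F (x + 1) - F 0 := by
    refine integral_eq_of_hasDerivAt_off_countable_of_le F f hb (countable_singleton x) ?_ ?_
      (intervalIntegrable_log_sub_div_sq (by norm_num) (by linarith))
    · exact fun y hy =>
        (continuousAt_logKernelPrimitive hx1 (by linarith [hy.1])).continuousWithinAt
    · exact fun y hy => hasDerivAt_logKernelPrimitive hx1 (by linarith [hy.1.1]) hy.2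
  have hderiv : ∀ y ∈ Ioi (x + 1), HasDerivAt F (f y) y := fun y hy =>
    hasDerivAt_logKernelPrimitive hx1 (by linarith [mem_Ioi.1 hy]) (by linarith [mem_Ioi.1 hy])
  have hcont : ContinuousWithinAt F (Ici (x + 1)) (x + 1) :=
    (continuousAt_logKernelPrimitive hx1 (by linarith)).continuousWithinAt
  have hnonneg : ∀ y ∈ Ioi (x + 1), 0 ≤ f y := fun y hy =>
    div_nonneg (log_nonneg (by linarith [mem_Ioi.1 hy])) (sq_nonneg _)
  have hlim := tendsto_logKernelPrimitive_atTop hx1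
  have hfar : ∫ y in Ioi (x + 1), f y = 0 - F (x + 1) :=
    integral_Ioi_of_hasDerivAt_of_nonneg hcont hderiv hnonneg hlim
  rw [← Ioc_union_Ioi_eq_Ioi hb, setIntegral_union (Ioc_disjoint_Ioi le_rfl) measurableSet_Ioi
    ((intervalIntegrable_iff_integrableOn_Ioc_of_le hb).1
      (intervalIntegrable_log_sub_div_sq (by norm_num) (by linarith)))
    (integrableOn_Ioi_deriv_of_nonneg hcont hderiv hnonneg hlim),
    ← intervalIntegral.integral_of_le hb, hnear, hfar]
  ring

theorem stmt_5 (x : ℝ) (hx : 0 < x) :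
    ∫ y in Ioi (0:ℝ), Real.log |x - y| / (1 + y) ^ 2
      = (x / (1 + x)) * Real.log x := by
  simp_rw [abs_sub_comm x, log_abs]
  rw [integral_Ioi_log_sub_div_sq hx, logKernelPrimitive_zero, neg_neg]
end

section
/- Let G₁ and E be independent exponential(1) random variables and 0 < p < 1, q = 1 − p. Then the random variable p²G₁/(p²G₁ + q²E) has density y ↦ p²q²/(p²(1−y)+q²y)² on (0,1). -/
/-!
Write `X = a G / (a G + b E)` with `a = p²`, `b = q²`. For `0 < y < 1` the event `X ≤ y` is
`E ≥ c G` with `c = a (1 - y) / (b y)`, so conditioning on `G` and using the exponential tail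
gives `P (X ≤ y) = E[exp (-c G)] = 1 / (1 + c) = b y / (a (1 - y) + b y)`, whose derivative in
`y` is `a b / (a (1 - y) + b y)²`. As `X ∈ (0, 1)` almost surely, this CDF determines the law.
-/

open Real MeasureTheory Set ProbabilityTheory

section Exponential

variable {r : ℝ}

lemma expMeasure_eq_withDensity (r : ℝ) : expMeasure r = volume.withDensity (exponentialPDF r) :=
  rfl

lemma measurable_exponentialPDF (r : ℝ) : Measurable (exponentialPDF r) :=
  (measurable_exponentialPDFReal r).ennreal_ofReal

lemma ae_pos_expMeasure (r : ℝ) : ∀ᵐ x ∂expMeasure r, 0 < x := by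
  rw [ae_iff]
  have hset : {x : ℝ | ¬ 0 < x} = Iic 0 := by ext; simp
  rw [hset, expMeasure_eq_withDensity, withDensity_apply _ measurableSet_Iic,
    ← setLIntegral_congr Iio_ae_eq_Iic]
  exact lintegral_exponentialPDF_of_nonpos le_rfl

lemma expMeasure_Ici (hr : 0 < r) {t : ℝ} (ht : 0 ≤ t) :
    expMeasure r (Ici t) = ENNReal.ofReal (exp (-(r * t))) := by
  have := isProbabilityMeasure_expMeasure hr
  have hIio : expMeasure r (Iio t) = expMeasure r (Iic t) := by
    simp only [expMeasure_eq_withDensity, withDensity_apply _ measurableSet_Iio,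
      withDensity_apply _ measurableSet_Iic, setLIntegral_congr Iio_ae_eq_Iic]
  have hexp_le : exp (-(r * t)) ≤ 1 := exp_le_one_iff.2 (by nlinarith)
  rw [← compl_Iio, prob_compl_eq_one_sub measurableSet_Iio, hIio, ← ofReal_cdf,
    cdf_expMeasure_eq hr, if_pos ht, ← ENNReal.ofReal_one,
    ← ENNReal.ofReal_sub _ (sub_nonneg.2 hexp_le), sub_sub_cancel]

lemma lintegral_exp_neg_mul_expMeasure (hr : 0 ≤ r) {c : ℝ} (hrc : 0 < r + c) :
    ∫⁻ x, ENNReal.ofReal (exp (-(c * x))) ∂expMeasure r = ENNReal.ofReal (r / (r + c)) := by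
  have hpdf : ∀ x, exponentialPDF r x * ENNReal.ofReal (exp (-(c * x)))
      = ENNReal.ofReal (r / (r + c)) * exponentialPDF (r + c) x := by
    intro x
    simp only [exponentialPDF_eq]
    split_ifs
    · rw [← ENNReal.ofReal_mul (by positivity), ← ENNReal.ofReal_mul (by positivity)]
      congr 1
      field_simp
      rw [mul_assoc, ← exp_add]
      ring_nf
    · simp
  rw [expMeasure_eq_withDensity,
    lintegral_withDensity_eq_lintegral_mul _ (measurable_exponentialPDF r) (by fun_prop)]
  simp only [Pi.mul_apply, hpdf]
  rw [lintegral_const_mul _ (measurable_exponentialPDF _),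
    lintegral_exponentialPDF_eq_one hrc, mul_one]

end Exponential

lemma ext_of_Iic_of_ae_mem_Ioo {μ ν : Measure ℝ} [IsFiniteMeasure μ] {a b : ℝ}
    (hμ : ∀ᵐ x ∂μ, x ∈ Ioo a b) (hν : ∀ᵐ x ∂ν, x ∈ Ioo a b) (huniv : μ univ = ν univ)
    (hIic : ∀ y ∈ Ioo a b, μ (Iic y) = ν (Iic y)) : μ = ν := by
  refine Measure.ext_of_Iic μ ν fun y => ?_
  rcases le_or_gt y a with hya | hay
  · have hnull : ∀ ρ : Measure ℝ, (∀ᵐ x ∂ρ, x ∈ Ioo a b) → ρ (Iic y) = 0 := fun ρ hρ =>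
      measure_mono_null (show Iic y ⊆ {x | x ∉ Ioo a b} from fun x hx hx' => by
        linarith [hx'.1, mem_Iic.1 hx]) (ae_iff.1 hρ)
    rw [hnull μ hμ, hnull ν hν]
  rcases lt_or_ge y b with hyb | hby
  · exact hIic y ⟨hay, hyb⟩
  · have hfull : ∀ ρ : Measure ℝ, (∀ᵐ x ∂ρ, x ∈ Ioo a b) → ρ (Iic y) = ρ univ := fun ρ hρ =>
      measure_congr (ae_eq_univ.2 (measure_mono_null
        (fun x (hx : ¬x ≤ y) (hx' : x ∈ Ioo a b) => hx (hx'.2.le.trans hby)) (ae_iff.1 hρ)))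
    rw [hfull μ hμ, hfull ν hν, huniv]

noncomputable section

def ratioDensity (a b y : ℝ) : ℝ := a * b / (a * (1 - y) + b * y) ^ 2

def ratioCDF (a b y : ℝ) : ℝ := b * y / (a * (1 - y) + b * y)

def ratioMeasure (a b : ℝ) : Measure ℝ :=
  volume.withDensity fun y => ENNReal.ofReal ((Ioo 0 1).indicator (ratioDensity a b) y)

end

section Ratio

variable {a b r : ℝ}

lemma mul_one_sub_add_mul_pos (ha : 0 < a) (hb : 0 < b) {t : ℝ} (ht : t ∈ Icc (0 : ℝ) 1) :
    0 < a * (1 - t) + b * t := by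
  rcases ht.2.lt_or_eq with ht1 | rfl
  · nlinarith [mul_nonneg hb.le ht.1, mul_pos ha (sub_pos.2 ht1)]
  · simpa using hb

lemma hasDerivAt_ratioCDF {t : ℝ} (h : a * (1 - t) + b * t ≠ 0) :
    HasDerivAt (ratioCDF a b) (ratioDensity a b t) t := by
  have hnum : HasDerivAt (fun t => b * t) b t := by simpa using (hasDerivAt_id t).const_mul b
  have hden : HasDerivAt (fun t => a * (1 - t) + b * t) (b - a) t :=
    ((((hasDerivAt_id t).const_sub 1).const_mul a).add
      ((hasDerivAt_id t).const_mul b)).congr_deriv (by ring)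
  refine (hnum.div hden h).congr_deriv ?_
  rw [ratioDensity]
  congr 1
  ring

lemma lintegral_Ioc_ratioDensity (ha : 0 < a) (hb : 0 < b) {y : ℝ} (hy : y ∈ Icc (0 : ℝ) 1) :
    ∫⁻ t in Ioc 0 y, ENNReal.ofReal (ratioDensity a b t) = ENNReal.ofReal (ratioCDF a b y) := by
  have hpos : ∀ t ∈ Icc 0 y, 0 < a * (1 - t) + b * t := fun t ht =>
    mul_one_sub_add_mul_pos ha hb ⟨ht.1, ht.2.trans hy.2⟩
  have hcont : ContinuousOn (ratioDensity a b) (Icc 0 y) :=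
    continuousOn_const.div (by fun_prop) fun t ht => (pow_pos (hpos t ht) 2).ne'
  rw [← ofReal_integral_eq_lintegral_ofReal
      ((hcont.integrableOn_Icc).mono_set Ioc_subset_Icc_self)
      (ae_of_all _ fun t => by unfold ratioDensity; positivity),
    ← intervalIntegral.integral_of_le hy.1,
    intervalIntegral.integral_eq_sub_of_hasDerivAt
      (fun t ht => hasDerivAt_ratioCDF (hpos t (by rwa [uIcc_of_le hy.1] at ht)).ne')
      (hcont.mono (uIcc_of_le hy.1).subset).intervalIntegrable]
  simp [ratioCDF]

lemma ratioMeasure_eq (a b : ℝ) :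
    ratioMeasure a b
      = (volume.restrict (Ioo 0 1)).withDensity fun y => ENNReal.ofReal (ratioDensity a b y) := by
  rw [ratioMeasure, ← withDensity_indicator measurableSet_Ioo]
  congr 1
  exact (indicator_comp_of_zero ENNReal.ofReal_zero).symm

lemma ae_mem_Ioo_ratioMeasure (a b : ℝ) : ∀ᵐ y ∂ratioMeasure a b, y ∈ Ioo 0 1 := by
  rw [ratioMeasure_eq]
  exact (withDensity_absolutelyContinuous _ _).ae_le (ae_restrict_mem measurableSet_Ioo)

lemma ratioMeasure_Iic (ha : 0 < a) (hb : 0 < b) {y : ℝ} (hy : y ∈ Ioo (0 : ℝ) 1) :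
    ratioMeasure a b (Iic y) = ENNReal.ofReal (ratioCDF a b y) := by
  rw [ratioMeasure_eq, withDensity_apply _ measurableSet_Iic,
    Measure.restrict_restrict measurableSet_Iic,
    show Iic y ∩ Ioo 0 1 = Ioc 0 y by grind,
    lintegral_Ioc_ratioDensity ha hb ⟨hy.1.le, hy.2.le⟩]

lemma ratioMeasure_univ (ha : 0 < a) (hb : 0 < b) : ratioMeasure a b univ = 1 := by
  rw [ratioMeasure_eq, withDensity_apply _ MeasurableSet.univ, Measure.restrict_univ,
    setLIntegral_congr Ioo_ae_eq_Ioc, lintegral_Ioc_ratioDensity ha hb ⟨zero_le_one, le_rfl⟩]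
  simp [ratioCDF, hb.ne']


lemma mul_div_mul_add_mul_le_iff (ha : 0 < a) (hb : 0 < b) {x y z : ℝ} (hx : 0 < x) (hz : 0 < z)
    (hy : 0 < y) : a * x / (a * x + b * z) ≤ y ↔ a * (1 - y) / (b * y) * x ≤ z := by
  rw [div_le_iff₀ (by positivity), div_mul_eq_mul_div, div_le_iff₀ (by positivity)]
  constructor <;> intro h <;> nlinarith

lemma map_ratio_expMeasure_prod_Iic (hr : 0 < r) (ha : 0 < a) (hb : 0 < b) {y : ℝ}
    (hy : y ∈ Ioo (0 : ℝ) 1) :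
    ((expMeasure r).prod (expMeasure r)).map (fun x => a * x.1 / (a * x.1 + b * x.2)) (Iic y)
      = ENNReal.ofReal (ratioCDF a b y) := by
  have := isProbabilityMeasure_expMeasure hr
  set c := a * (1 - y) / (b * y)
  have hc : 0 ≤ c := div_nonneg (mul_nonneg ha.le (sub_pos.2 hy.2).le) (mul_pos hb hy.1).le
  have hslice : ∀ᵐ x ∂expMeasure r,
      expMeasure r {z | a * x / (a * x + b * z) ≤ y} = ENNReal.ofReal (exp (-(r * c * x))) := by
    filter_upwards [ae_pos_expMeasure r] with x hx
    have hset : {z | a * x / (a * x + b * z) ≤ y} =ᵐ[expMeasure r] Ici (c * x) := by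
      filter_upwards [ae_pos_expMeasure r] with z hz
      exact propext (mul_div_mul_add_mul_le_iff ha hb hx hz hy.1)
    rw [measure_congr hset, expMeasure_Ici hr (mul_nonneg hc hx.le), mul_assoc]
  rw [Measure.map_apply (by fun_prop) measurableSet_Iic, Measure.prod_apply (by measurability)]
  change ∫⁻ x, expMeasure r {z | a * x / (a * x + b * z) ≤ y} ∂expMeasure r = _
  rw [lintegral_congr_ae hslice, lintegral_exp_neg_mul_expMeasure hr.le (by positivity)]
  have hy0 := hy.1
  have hy1 := sub_pos.2 hy.2
  congr 1
  simp only [ratioCDF, c]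
  field_simp
  ring

lemma ae_mem_Ioo_map_ratio (ha : 0 < a) (hb : 0 < b) :
    ∀ᵐ y ∂((expMeasure r).prod (expMeasure r)).map (fun x => a * x.1 / (a * x.1 + b * x.2)),
      y ∈ Ioo 0 1 := by
  rw [ae_map_iff (by fun_prop) (p := (· ∈ Ioo 0 1)) measurableSet_Ioo]
  filter_upwards [Measure.quasiMeasurePreserving_fst.ae (ae_pos_expMeasure r),
    Measure.quasiMeasurePreserving_snd.ae (ae_pos_expMeasure r)] with x hx hz
  have hpos : 0 < a * x.1 + b * x.2 := by positivity
  exact ⟨by positivity, (div_lt_one hpos).2 (by nlinarith)⟩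

lemma map_ratio_expMeasure_prod (hr : 0 < r) (ha : 0 < a) (hb : 0 < b) :
    ((expMeasure r).prod (expMeasure r)).map (fun x => a * x.1 / (a * x.1 + b * x.2))
      = ratioMeasure a b := by
  have := isProbabilityMeasure_expMeasure hr
  have : IsProbabilityMeasure (((expMeasure r).prod (expMeasure r)).map
      (fun x => a * x.1 / (a * x.1 + b * x.2))) := Measure.isProbabilityMeasure_map (by fun_prop)
  refine ext_of_Iic_of_ae_mem_Ioo (ae_mem_Ioo_map_ratio ha hb) (ae_mem_Ioo_ratioMeasure a b)
    (by rw [measure_univ, ratioMeasure_univ ha hb]) fun y hy => ?_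
  rw [map_ratio_expMeasure_prod_Iic hr ha hb hy, ratioMeasure_Iic ha hb hy]

end Ratio

theorem stmt_7 {Ω : Type*} [MeasureSpace Ω] [IsProbabilityMeasure (ℙ : Measure Ω)]
    (G E : Ω → ℝ) (hGE : IndepFun G E)
    (hG : Measure.map G ℙ = expMeasure 1)
    (hE : Measure.map E ℙ = expMeasure 1)
    (p q : ℝ) (hp0 : 0 < p) (hp1 : p < 1) (hq : q = 1 - p) :
    Measure.map (fun ω => p ^ 2 * G ω / (p ^ 2 * G ω + q ^ 2 * E ω)) ℙ
      = volume.withDensity (fun y => ENNReal.ofReal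
          (Set.indicator (Ioo (0:ℝ) 1)
            (fun y => p ^ 2 * q ^ 2 / (p ^ 2 * (1 - y) + q ^ 2 * y) ^ 2) y)) := by
  have hq0 : 0 < q := by linarith
  have := isProbabilityMeasure_expMeasure (r := 1) one_pos
  have hGm : AEMeasurable G ℙ := aemeasurable_of_map_neZero (by rw [hG]; infer_instance)
  have hEm : AEMeasurable E ℙ := aemeasurable_of_map_neZero (by rw [hE]; infer_instance)
  have hlaw : Measure.map (fun ω => (G ω, E ω)) ℙ = (expMeasure 1).prod (expMeasure 1) := by
    rw [(indepFun_iff_map_prod_eq_prod_map_map hGm hEm).1 hGE, hG, hE]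
  change _ = ratioMeasure (p ^ 2) (q ^ 2)
  rw [← map_ratio_expMeasure_prod one_pos (pow_pos hp0 2) (pow_pos hq0 2), ← hlaw,
    AEMeasurable.map_map_of_aemeasurable (by fun_prop) (hGm.prodMk hEm)]
  rfl
end
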